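/- arXiv:1502.05025 — 2 statements merged into one kernel-verified Lean document; each statement's English description precedes it below -/
import Mathlib

section
/- Let f : ℂ → ℂ, f(z) = |z|² z. For any u, v ∈ ℂ with |u| ≤ M and |v| ≤ M, one has |(f(u) + f(v))/2 − f((u+v)/2)| ≤ (3/4) |u − v|² M. -/
/-- For `f(z) = |z|²z` and `u, v ∈ ℂ` with `|u| ≤ M`, `|v| ≤ M`,
`|(f(u) + f(v))/2 − f((u+v)/2)| ≤ (3/4)|u − v|² M`. -/
theorem cubic_midpoint_trapezoid_discrepancy (M : ℝ) (u v : ℂ)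
    (hu : ‖u‖ ≤ M) (hv : ‖v‖ ≤ M) :
    ‖((‖u‖ ^ 2 : ℝ) : ℂ) * u / 2 + ((‖v‖ ^ 2 : ℝ) : ℂ) * v / 2
        - ((‖(u + v) / 2‖ ^ 2 : ℝ) : ℂ) * ((u + v) / 2)‖
      ≤ 3 / 4 * ‖u - v‖ ^ 2 * M := by
  have h : ∀ z : ℂ, ((‖z‖ ^ 2 : ℝ) : ℂ) = z * (starRingEnd ℂ) z := by
    intro z; rw [Complex.sq_norm]; exact (Complex.mul_conj z).symm
  have key : ((‖u‖ ^ 2 : ℝ) : ℂ) * u / 2 + ((‖v‖ ^ 2 : ℝ) : ℂ) * v / 2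
        - ((‖(u + v) / 2‖ ^ 2 : ℝ) : ℂ) * ((u + v) / 2)
      = ((u - v) ^ 2 * ((starRingEnd ℂ) u + (starRingEnd ℂ) v)
          + 2 * (u - v) * ((starRingEnd ℂ) u - (starRingEnd ℂ) v) * (u + v)) / 8 := by
    rw [h, h, h]
    simp only [map_div₀, map_add, map_ofNat]
    ring
  rw [key]
  have habs : ‖(u - v) ^ 2 * ((starRingEnd ℂ) u + (starRingEnd ℂ) v)
          + 2 * (u - v) * ((starRingEnd ℂ) u - (starRingEnd ℂ) v) * (u + v)‖
      ≤ 3 * ‖u - v‖ ^ 2 * ‖u + v‖ := by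
    calc ‖_‖ ≤ ‖(u - v) ^ 2 * ((starRingEnd ℂ) u + (starRingEnd ℂ) v)‖
          + ‖2 * (u - v) * ((starRingEnd ℂ) u - (starRingEnd ℂ) v) * (u + v)‖ :=
        norm_add_le _ _
      _ = ‖u - v‖ ^ 2 * ‖u + v‖
          + 2 * (‖u - v‖ * ‖u - v‖) * ‖u + v‖ := by
        simp only [norm_mul, norm_pow, Complex.norm_ofNat]
        rw [← map_add, ← map_sub, Complex.norm_conj, Complex.norm_conj]; ring
      _ = 3 * ‖u - v‖ ^ 2 * ‖u + v‖ := by ring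
  have huv : ‖u + v‖ ≤ 2 * M :=
    (norm_add_le u v).trans (by linarith)
  have hd : ‖u - v‖ ^ 2 ≥ 0 := sq_nonneg _
  rw [norm_div, Complex.norm_ofNat]
  rw [div_le_iff₀ (by norm_num : (0:ℝ) < 8)]
  calc ‖_‖ ≤ 3 * ‖u - v‖ ^ 2 * ‖u + v‖ := habs
    _ ≤ 3 * ‖u - v‖ ^ 2 * (2 * M) := by
        apply mul_le_mul_of_nonneg_left huv; positivity
    _ = 3 / 4 * ‖u - v‖ ^ 2 * M * 8 := by ring
end

section
/- Let u : [a,b] → ℂ be C² with ‖u‖_∞ ≤ K₀, ‖u'‖_∞ ≤ K₁, ‖u''‖_∞ ≤ K₂ on [a,b], τ = b − a. Then for f(z) = |z|²z, the function t ↦ f(u(t)) satisfies |(d²/dt²) f(u(t))| ≤ 3 K₀ (2 K₁² + K₀ K₂) for all t ∈ [a,b], and consequently |∫_a^b f(u(t)) dt − τ (f(u(a)) + f(u(b)))/2| ≤ (τ³/4) K₀ (2 K₁² + K₀ K₂). -/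
set_option maxHeartbeats 1000000



open Set intervalIntegral

lemma trapezoid_aux {E : Type*} [NormedAddCommGroup E] [NormedSpace ℝ E] [CompleteSpace E]
    (a b : ℝ) (hab : a < b) (G G₁ G₂ : ℝ → E)
    (hG : ∀ t ∈ Icc a b, HasDerivWithinAt G (G₁ t) (Icc a b) t)
    (hG₁ : ∀ t ∈ Icc a b, HasDerivWithinAt G₁ (G₂ t) (Icc a b) t)
    (M : ℝ) (hM : ∀ t ∈ Icc a b, ‖G₂ t‖ ≤ M) :
    ‖(∫ t in a..b, G t) - ((b - a) / 2) • (G a + G b)‖ ≤ (b - a) ^ 3 / 12 * M := by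
  have hM0 : 0 ≤ M := le_trans (norm_nonneg _) (hM a ⟨le_refl a, hab.le⟩)
  set ψ : ℝ → E := fun t => (1/2 : ℝ) • (G t - G a) - ((t - a)/2) • G₁ t with hψ
  have hψd : ∀ t ∈ Icc a b, HasDerivWithinAt ψ (-(((t - a)/2) • G₂ t)) (Icc a b) t := by
    intro t ht
    have h1 : HasDerivWithinAt (fun s : ℝ => (s - a)/2) (1/2) (Icc a b) t :=
      ((hasDerivWithinAt_id t _).sub_const a).div_const 2
    have h2 := (((hG t ht).sub_const (G a)).const_smul (1/2:ℝ)).sub (h1.smul (hG₁ t ht))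
    convert h2 using 1
    · rfl
    module
  have cψ : ContinuousOn ψ (Icc a b) := fun t ht => (hψd t ht).continuousWithinAt
  have hbound : ∀ t ∈ Icc a b, ‖ψ t‖ ≤ M/4 * (t - a)^2 := by
    intro t ht
    refine image_norm_le_of_norm_deriv_right_le_deriv_boundary
      (f' := fun s => -(((s - a)/2) • G₂ s)) (B := fun s => M/4 * (s - a)^2) (B' := fun s => M/2 * (s - a)) cψ ?_ ?_ ?_ ?_ ht
    · intro x hx
      exact (hψd x (Ico_subset_Icc_self hx)).mono_of_mem_nhdsWithin (Icc_mem_nhdsGE_of_mem hx)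
    · simp [hψ]
    · intro x
      have h := (((hasDerivAt_id x).sub_const a).pow 2).const_mul (M/4)
      refine h.congr_deriv ?_
      simp only [id_eq]
      ring
    · intro x hx
      have h := hM x (Ico_subset_Icc_self hx)
      have hxa : a ≤ x := hx.1
      have h0 := norm_nonneg (G₂ x)
      rw [norm_neg, norm_smul, Real.norm_eq_abs, abs_of_nonneg (by linarith : (0:ℝ) ≤ (x-a)/2)]
      nlinarith
  have cG : ContinuousOn G (Icc a b) := fun t ht => (hG t ht).continuousWithinAt
  have cG₁ : ContinuousOn G₁ (Icc a b) := fun t ht => (hG₁ t ht).continuousWithinAt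
  have intG : IntervalIntegrable G MeasureTheory.volume a b :=
    cG.intervalIntegrable_of_Icc hab.le
  have intG₁ : IntervalIntegrable (fun t => (t - a) • G₁ t) MeasureTheory.volume a b :=
    (((continuous_id.sub continuous_const).continuousOn).smul cG₁).intervalIntegrable_of_Icc hab.le
  have key : (∫ t in a..b, (G t + (t - a) • G₁ t)) = (b - a) • G b := by
    have h := integral_eq_sub_of_hasDeriv_right_of_le hab.le
      (f := fun t => (t - a) • G t) (f' := fun t => G t + (t - a) • G₁ t)
      (((continuous_id.sub continuous_const).continuousOn).smul cG)
      (fun x hx => by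
        have hd := ((hasDerivWithinAt_id x (Icc a b)).sub_const a).smul
          (hG x (Ioo_subset_Icc_self hx))
        have hd' : HasDerivAt (fun t => (t - a) • G t) ((x - a) • G₁ x + (1:ℝ) • G x) x :=
          hd.hasDerivAt (Icc_mem_nhds hx.1 hx.2)
        have : HasDerivAt (fun t => (t - a) • G t) (G x + (x - a) • G₁ x) x := by
          convert hd' using 1; module
        exact this.hasDerivWithinAt)
      (intG.add intG₁)
    simpa using h
  have hmid : (∫ t in a..b, (t - a) • G₁ t) = (b - a) • G b - ∫ t in a..b, G t := by
    have := integral_add intG intG₁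
    rw [this] at key
    linear_combination (norm := module) key
  have hψint : (∫ t in a..b, ψ t) = (∫ t in a..b, G t) - ((b - a)/2) • (G a + G b) := by
    have e1 : (∫ t in a..b, ψ t)
        = (∫ t in a..b, ((1:ℝ)/2) • (G t - G a)) - ∫ t in a..b, ((t - a)/2) • G₁ t := by
      apply integral_sub
      · exact (((intG.sub (intervalIntegrable_const)).smul (1/2:ℝ)))
      · have : (fun t => ((t - a)/2) • G₁ t) = fun t => (1/2 : ℝ) • ((t - a) • G₁ t) := by
          funext t; rw [smul_smul]; ring_nf
        rw [this]; exact intG₁.smul _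
    have e2 : (∫ t in a..b, ((1:ℝ)/2) • (G t - G a))
        = ((1:ℝ)/2) • ((∫ t in a..b, G t) - (b - a) • G a) := by
      rw [integral_smul, integral_sub intG intervalIntegrable_const, integral_const]
    have e3 : (∫ t in a..b, ((t - a)/2) • G₁ t)
        = ((1:ℝ)/2) • ((b - a) • G b - ∫ t in a..b, G t) := by
      have : (fun t => ((t - a)/2) • G₁ t) = fun t => (1/2 : ℝ) • ((t - a) • G₁ t) := by
        funext t; rw [smul_smul]; ring_nf
      rw [this, integral_smul, hmid]
    rw [e1, e2, e3]
    module
  rw [← hψint]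
  calc ‖∫ t in a..b, ψ t‖ ≤ ∫ t in a..b, ‖ψ t‖ := norm_integral_le_integral_norm hab.le
    _ ≤ ∫ t in a..b, M/4 * (t - a)^2 := by
        apply integral_mono_on hab.le
        · exact (cψ.norm).intervalIntegrable_of_Icc hab.le
        · exact ((continuous_const.mul ((continuous_id.sub continuous_const).pow 2)).intervalIntegrable a b)
        · exact hbound
    _ = (b - a)^3/12 * M := by
        rw [integral_const_mul,
          intervalIntegral.integral_comp_sub_right (fun t => t^2) a, integral_pow]
        push_cast
        ring

/-- For `f(z) = |z|²z` and `u : [a,b] → ℂ` of class C² with `‖u‖ ≤ K₀`, `‖u'‖ ≤ K₁`,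
`‖u''‖ ≤ K₂` on `[a,b]`: the second derivative of `t ↦ f(u(t))` is bounded by
`3K₀(2K₁² + K₀K₂)`, and the trapezoidal error satisfies
`|∫_a^b f(u(t)) dt − τ(f(u(a))+f(u(b)))/2| ≤ (τ³/4) K₀ (2K₁² + K₀K₂)` with `τ = b − a`. -/
theorem cubic_composition_trapezoid (a b : ℝ) (hab : a < b) (u : ℝ → ℂ)
    (hu : ContDiffOn ℝ 2 u (Set.Icc a b))
    (K₀ K₁ K₂ : ℝ)
    (h0 : ∀ t ∈ Set.Icc a b, ‖u t‖ ≤ K₀)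
    (h1 : ∀ t ∈ Set.Icc a b, ‖iteratedDerivWithin 1 u (Set.Icc a b) t‖ ≤ K₁)
    (h2 : ∀ t ∈ Set.Icc a b, ‖iteratedDerivWithin 2 u (Set.Icc a b) t‖ ≤ K₂) :
    (∀ t ∈ Set.Icc a b,
      ‖iteratedDerivWithin 2 (fun s => ((‖u s‖ ^ 2 : ℝ) : ℂ) * u s) (Set.Icc a b) t‖
        ≤ 3 * K₀ * (2 * K₁ ^ 2 + K₀ * K₂)) ∧
    ‖(∫ t in a..b, ((‖u t‖ ^ 2 : ℝ) : ℂ) * u t)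
        - ((b - a : ℝ) : ℂ) * (((‖u a‖ ^ 2 : ℝ) : ℂ) * u a
          + ((‖u b‖ ^ 2 : ℝ) : ℂ) * u b) / 2‖
      ≤ (b - a) ^ 3 / 4 * (K₀ * (2 * K₁ ^ 2 + K₀ * K₂)) := by
  set S := Set.Icc a b with hSdef
  have hS : UniqueDiffOn ℝ S := uniqueDiffOn_Icc hab
  set v : ℝ → ℂ := derivWithin u S with hvdef
  set w : ℝ → ℂ := derivWithin v S with hwdef
  have hud : DifferentiableOn ℝ u S := hu.differentiableOn two_ne_zero
  have hvC1 : ContDiffOn ℝ 1 v S := hu.derivWithin hS (by norm_num)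
  have hvd : DifferentiableOn ℝ v S := hvC1.differentiableOn one_ne_zero
  have hu' : ∀ t ∈ S, HasDerivWithinAt u (v t) S t := fun t ht => (hud t ht).hasDerivWithinAt
  have hv' : ∀ t ∈ S, HasDerivWithinAt v (w t) S t := fun t ht => (hvd t ht).hasDerivWithinAt
  have hvb : ∀ t ∈ S, ‖v t‖ ≤ K₁ := by
    intro t ht
    have := h1 t ht
    rwa [iteratedDerivWithin_one] at this
  have hwb : ∀ t ∈ S, ‖w t‖ ≤ K₂ := by
    intro t ht
    have h := h2 t ht
    rw [iteratedDerivWithin_succ', iteratedDerivWithin_one] at h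
    exact h
  -- nonnegativity
  have haS : a ∈ S := ⟨le_refl a, hab.le⟩
  have hK0 : 0 ≤ K₀ := le_trans (norm_nonneg _) (h0 a haS)
  have hK1 : 0 ≤ K₁ := le_trans (norm_nonneg _) (hvb a haS)
  have hK2 : 0 ≤ K₂ := le_trans (norm_nonneg _) (hwb a haS)
  -- the cubic composition and its derivatives
  set G : ℝ → ℂ := fun s => u s * star (u s) * u s with hGdef
  set G₁ : ℝ → ℂ := fun t => (v t * star (u t) + u t * star (v t)) * u t
      + u t * star (u t) * v t with hG₁def
  set G₂ : ℝ → ℂ := fun t =>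
      (((w t * star (u t) + v t * star (v t)) + (v t * star (v t) + u t * star (w t))) * u t
        + (v t * star (u t) + u t * star (v t)) * v t)
      + ((v t * star (u t) + u t * star (v t)) * v t + u t * star (u t) * w t) with hG₂def
  have hFeq : (fun s => ((‖u s‖ ^ 2 : ℝ) : ℂ) * u s) = G := by
    funext s
    rw [hGdef]
    simp only [Complex.sq_norm]
    rw [← Complex.mul_conj]
    rfl
  have hG : ∀ t ∈ S, HasDerivWithinAt G (G₁ t) S t := fun t ht =>
    ((hu' t ht).mul (hu' t ht).star).mul (hu' t ht)
  have hG₁ : ∀ t ∈ S, HasDerivWithinAt G₁ (G₂ t) S t := fun t ht =>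
    ((((hv' t ht).mul (hu' t ht).star).add ((hu' t ht).mul (hv' t ht).star)).mul
      (hu' t ht)).add (((hu' t ht).mul (hu' t ht).star).mul (hv' t ht))
  have hG₂b : ∀ t ∈ S, ‖G₂ t‖ ≤ 3 * K₀ * (2 * K₁ ^ 2 + K₀ * K₂) := by
    intro t ht
    have e0 := h0 t ht
    have e1 := hvb t ht
    have e2 := hwb t ht
    have n0 := norm_nonneg (u t)
    have n1 := norm_nonneg (v t)
    have n2 := norm_nonneg (w t)
    have mulb : ∀ (x y : ℂ) (c d : ℝ), ‖x‖ ≤ c → ‖y‖ ≤ d → ‖x * star y‖ ≤ c * d := by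
      intro x y c d hx hy
      rw [norm_mul, norm_star]
      exact mul_le_mul hx hy (norm_nonneg _) (le_trans (norm_nonneg _) hx)
    have s1 : ‖v t * star (u t) + u t * star (v t)‖ ≤ K₁ * K₀ + K₀ * K₁ :=
      le_trans (norm_add_le _ _) (add_le_add (mulb _ _ _ _ e1 e0) (mulb _ _ _ _ e0 e1))
    have s2 : ‖(w t * star (u t) + v t * star (v t)) + (v t * star (v t) + u t * star (w t))‖
        ≤ (K₂ * K₀ + K₁ * K₁) + (K₁ * K₁ + K₀ * K₂) :=
      le_trans (norm_add_le _ _) (add_le_add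
        (le_trans (norm_add_le _ _) (add_le_add (mulb _ _ _ _ e2 e0) (mulb _ _ _ _ e1 e1)))
        (le_trans (norm_add_le _ _) (add_le_add (mulb _ _ _ _ e1 e1) (mulb _ _ _ _ e0 e2))))
    have t1 : ‖G₂ t‖ ≤ ((((K₂ * K₀ + K₁ * K₁) + (K₁ * K₁ + K₀ * K₂)) * K₀
        + (K₁ * K₀ + K₀ * K₁) * K₁)
        + ((K₁ * K₀ + K₀ * K₁) * K₁ + (K₀ * K₀) * K₂)) := by
      rw [hG₂def]
      refine le_trans (norm_add_le _ _) (add_le_add (le_trans (norm_add_le _ _) ?_)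
        (le_trans (norm_add_le _ _) ?_))
      · refine add_le_add ?_ ?_
        · rw [norm_mul]
          exact mul_le_mul s2 e0 (norm_nonneg _) (by positivity)
        · rw [norm_mul]
          exact mul_le_mul s1 e1 (norm_nonneg _) (by positivity)
      · refine add_le_add ?_ ?_
        · rw [norm_mul]
          exact mul_le_mul s1 e1 (norm_nonneg _) (by positivity)
        · rw [norm_mul, norm_mul, norm_star]
          refine mul_le_mul (mul_le_mul e0 e0 n0 hK0) e2 n2 (by positivity)
    refine le_trans t1 (le_of_eq ?_)
    ring
  constructor
  · intro t ht
    rw [hFeq]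
    have hdG : ∀ s ∈ S, derivWithin G S s = G₁ s := fun s hs =>
      (hG s hs).derivWithin (hS s hs)
    have e : iteratedDerivWithin 2 G S t = G₂ t := by
      rw [iteratedDerivWithin_succ]
      have congr1 : ∀ s ∈ S, iteratedDerivWithin 1 G S s = G₁ s := fun s hs => by
        rw [iteratedDerivWithin_one]; exact hdG s hs
      rw [derivWithin_congr congr1 (congr1 t ht)]
      exact (hG₁ t ht).derivWithin (hS t ht)
    rw [e]
    exact hG₂b t ht
  · have key := trapezoid_aux a b hab G G₁ G₂ hG hG₁ (3 * K₀ * (2 * K₁ ^ 2 + K₀ * K₂)) hG₂b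
    have lhs_eq : (∫ t in a..b, ((‖u t‖ ^ 2 : ℝ) : ℂ) * u t)
        - ((b - a : ℝ) : ℂ) * (((‖u a‖ ^ 2 : ℝ) : ℂ) * u a
          + ((‖u b‖ ^ 2 : ℝ) : ℂ) * u b) / 2
        = (∫ t in a..b, G t) - ((b - a) / 2) • (G a + G b) := by
      have : ∀ s, ((‖u s‖ ^ 2 : ℝ) : ℂ) * u s = G s := fun s => congrFun hFeq s
      rw [intervalIntegral.integral_congr (fun s _ => this s), this a, this b]
      rw [Complex.real_smul]
      push_cast
      ring
    rw [lhs_eq]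
    refine le_trans key (le_of_eq ?_)
    ring
end
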